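/- Let ℓ ≥ 4 be an even integer and let r, m be integers with 2 ≤ r ≤ ℓ−2 and m ≥ ℓ+1. Let F₁ = (P_ℓ ∪ K̄_m) ⊗ T(m(r−1), r−1), F₂ = (K_{1,2} ∪ mK₂) ⊗ mK₂ ⊗ T(m(r−2), r−2), and F₃ = (K_{ℓ/2} ∪ K_{ℓ−1} ∪ K̄_m) ⊗ T(m(r−1), r−1). Then for every n, the graph K_{(ℓ−2)/2} ⊗ T(n − (ℓ−2)/2, r) is {F₁, F₂, F₃}-free; indeed, for each 1 ≤ i ≤ 3, deleting any set U of (ℓ−2)/2 vertices from F_i leaves a graph of chromatic number at least r+1. -/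

import Mathlib

/-!
Deleting a set `U` of at most `(ℓ - 2)/2` vertices from `F_i` leaves a clique on `r + 1`
vertices. Each factor of the joins contains more than `|U|` vertex-disjoint cliques of the size it
has to contribute (the rows `{q b, …, q b + q - 1}` of `T(m q, q)`, the copies of `K₂` in `mK₂`,
the edges `{2i, 2i+1}` of `P_ℓ`), so one of them misses `U`; at least two vertices of `K_{ℓ-1}`
survive; and cliques on the two sides of a join combine. Conversely, a copy of `F_i` in
`K_{(ℓ-2)/2} ⊗ T(n', r)` meets the clique side in at most `(ℓ - 2)/2` vertices, and the rest of it
maps into `T(n', r)`, hence is `r`-colourable.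
-/

open SimpleGraph

/-- `G` contains a (not necessarily induced) copy of `F`. -/
def ContainsCopy {V W : Type*} (F : SimpleGraph V) (G : SimpleGraph W) : Prop :=
  ∃ f : V → W, Function.Injective f ∧ ∀ ⦃a b : V⦄, F.Adj a b → G.Adj (f a) (f b)

/-- The join `G ⊗ H` of two graphs. -/
def gJoin {α β : Type*} (G : SimpleGraph α) (H : SimpleGraph β) : SimpleGraph (α ⊕ β) where
  Adj x y :=
    match x, y with
    | Sum.inl a, Sum.inl b => G.Adj a b
    | Sum.inr a, Sum.inr b => H.Adj a b
    | _, _ => True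
  symm := ⟨by rintro (a|a) (b|b) h <;> simp_all <;> exact h.symm⟩
  loopless := ⟨by rintro (a|a) h <;> simp_all⟩

/-- The disjoint union `G ∪ H` of two graphs. -/
def gUnion {α β : Type*} (G : SimpleGraph α) (H : SimpleGraph β) : SimpleGraph (α ⊕ β) where
  Adj x y :=
    match x, y with
    | Sum.inl a, Sum.inl b => G.Adj a b
    | Sum.inr a, Sum.inr b => H.Adj a b
    | _, _ => False
  symm := ⟨by rintro (a|a) (b|b) h <;> simp_all <;> exact h.symm⟩
  loopless := ⟨by rintro (a|a) h <;> simp_all⟩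

/-- The disjoint union `mH` of `m` copies of `H`. -/
def gCopies (m : ℕ) {α : Type*} (H : SimpleGraph α) : SimpleGraph (Fin m × α) where
  Adj x y := x.1 = y.1 ∧ H.Adj x.2 y.2
  symm := ⟨by rintro ⟨i, a⟩ ⟨j, b⟩ ⟨h1, h2⟩; exact ⟨h1.symm, h2.symm⟩⟩
  loopless := ⟨by rintro ⟨i, a⟩ ⟨_, h⟩; exact H.loopless.irrefl a h⟩

/-- Number of edges of a graph. -/
noncomputable def edgeCount {V : Type*} (G : SimpleGraph V) : ℕ := G.edgeSet.ncard

/-- `F₁ = (P_ℓ ∪ K̄_m) ⊗ T(m(r-1), r-1)`. -/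
def F₁ (ℓ r m : ℕ) :=
  gJoin (gUnion (pathGraph ℓ) (⊥ : SimpleGraph (Fin m))) (turanGraph (m * (r - 1)) (r - 1))

/-- `F₂ = (K_{1,2} ∪ mK₂) ⊗ mK₂ ⊗ T(m(r-2), r-2)`. -/
def F₂ (r m : ℕ) :=
  gJoin (gUnion (completeBipartiteGraph (Fin 1) (Fin 2)) (gCopies m (⊤ : SimpleGraph (Fin 2))))
    (gJoin (gCopies m (⊤ : SimpleGraph (Fin 2))) (turanGraph (m * (r - 2)) (r - 2)))

/-- `F₃ = (K_{ℓ/2} ∪ K_{ℓ-1} ∪ K̄_m) ⊗ T(m(r-1), r-1)`. -/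
def F₃ (ℓ r m : ℕ) :=
  gJoin (gUnion (gUnion (⊤ : SimpleGraph (Fin (ℓ / 2))) (⊤ : SimpleGraph (Fin (ℓ - 1))))
      (⊥ : SimpleGraph (Fin m)))
    (turanGraph (m * (r - 1)) (r - 1))

variable {V α β : Type*}

lemma Set.ncard_preimage_le_of_injective [Finite β] {f : α → β}
    (hf : Function.Injective f) (U : Set β) : (f ⁻¹' U).ncard ≤ U.ncard :=
  Set.ncard_le_ncard_of_injOn f (fun _ h ↦ h) hf.injOn

lemma Set.exists_lt_forall_ne_of_ncard_lt [Finite V] {U : Set V} {t : ℕ}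
    (hU : U.ncard < t) (π : V → ℕ) : ∃ b < t, ∀ v ∈ U, π v ≠ b := by
  obtain ⟨b, hb, hbU⟩ := Set.exists_mem_notMem_of_ncard_lt_ncard (s := π '' U) (t := Set.Iio t)
    (by simpa using (Set.ncard_image_le (f := π)).trans_lt hU)
  exact ⟨b, hb, fun v hv hvb ↦ hbU ⟨v, hv, hvb⟩⟩

namespace SimpleGraph

lemma turanGraph_colorable {n r : ℕ} (hr : 0 < r) : (turanGraph n r).Colorable r :=
  ⟨Coloring.mk (fun v ↦ ⟨v % r, Nat.mod_lt _ hr⟩) fun h heq ↦ h (Fin.mk.inj heq)⟩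

-- `ncard` of an infinite set is `0`, so this notion is only meaningful on finite vertex types.
def HasNCliqueAfterDeleting (G : SimpleGraph V) (k d : ℕ) : Prop :=
  ∀ U : Set V, U.ncard ≤ d → ∃ s : Finset V, G.IsNClique k s ∧ Disjoint (s : Set V) U

namespace HasNCliqueAfterDeleting

lemma le_chromaticNumber_induce {G : SimpleGraph V} {k d : ℕ} (h : G.HasNCliqueAfterDeleting k d)
    {U : Set V} (hU : U.ncard ≤ d) : (k : ℕ∞) ≤ (G.induce Uᶜ).chromaticNumber := by
  obtain ⟨s, hs, hsU⟩ := h U hU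
  refine le_chromaticNumber_of_pairwise_adj (ι := s) (by simp [hs.card_eq])
    (fun v ↦ ⟨v, Set.disjoint_left.1 hsU v.2⟩) fun v w hvw ↦ ?_
  exact hs.isClique v.2 w.2 (Subtype.coe_ne_coe.2 hvw)

lemma mono {G : SimpleGraph V} {k d j : ℕ} (h : G.HasNCliqueAfterDeleting k d) (hjk : j ≤ k) :
    G.HasNCliqueAfterDeleting j d := by
  intro U hU
  obtain ⟨s, hs, hsU⟩ := h U hU
  obtain ⟨t, hts, ht⟩ := Finset.exists_subset_card_eq (hjk.trans hs.card_eq.ge)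
  exact ⟨t, ⟨hs.isClique.subset (by simpa using hts), ht⟩,
    hsU.mono_left (by simpa using hts)⟩

variable {G : SimpleGraph α} {H : SimpleGraph β} {a b d : ℕ}

lemma join [Finite α] [Finite β] (hG : G.HasNCliqueAfterDeleting a d)
    (hH : H.HasNCliqueAfterDeleting b d) : (gJoin G H).HasNCliqueAfterDeleting (a + b) d := by
  intro U hU
  obtain ⟨s, hs, hsU⟩ :=
    hG (Sum.inl ⁻¹' U) ((Set.ncard_preimage_le_of_injective Sum.inl_injective U).trans hU)
  obtain ⟨t, ht, htU⟩ :=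
    hH (Sum.inr ⁻¹' U) ((Set.ncard_preimage_le_of_injective Sum.inr_injective U).trans hU)
  refine ⟨s.disjSum t, ⟨?_, by rw [Finset.card_disjSum, hs.card_eq, ht.card_eq]⟩, ?_⟩
  · rintro (x | x) hx (y | y) hy hxy
    · exact hs.isClique (Finset.inl_mem_disjSum.1 hx) (Finset.inl_mem_disjSum.1 hy)
        (fun h ↦ hxy (congrArg _ h))
    · trivial
    · trivial
    · exact ht.isClique (Finset.inr_mem_disjSum.1 hx) (Finset.inr_mem_disjSum.1 hy)
        (fun h ↦ hxy (congrArg _ h))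
  · rw [Set.disjoint_left]
    rintro (x | x) hx
    · exact Set.disjoint_left.1 hsU (Finset.inl_mem_disjSum.1 hx)
    · exact Set.disjoint_left.1 htU (Finset.inr_mem_disjSum.1 hx)

lemma mono_of_map_le {G' : SimpleGraph β} [Finite β] (f : α ↪ β) (hf : G.map f ≤ G')
    (hG : G.HasNCliqueAfterDeleting a d) : G'.HasNCliqueAfterDeleting a d := by
  intro U hU
  obtain ⟨s, hs, hsU⟩ :=
    hG (f ⁻¹' U) ((Set.ncard_preimage_le_of_injective f.injective U).trans hU)
  refine ⟨s.map f, hs.map.mono hf, ?_⟩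
  rw [Finset.coe_map, Set.disjoint_image_left]
  exact hsU

lemma union_left [Finite α] [Finite β] (hG : G.HasNCliqueAfterDeleting a d) :
    (gUnion G H).HasNCliqueAfterDeleting a d :=
  hG.mono_of_map_le .inl ((map_le_iff_le_comap _ _ _).2 fun _ _ h ↦ h)

lemma union_right [Finite α] [Finite β] (hH : H.HasNCliqueAfterDeleting b d) :
    (gUnion G H).HasNCliqueAfterDeleting b d :=
  hH.mono_of_map_le .inr ((map_le_iff_le_comap _ _ _).2 fun _ _ h ↦ h)

end HasNCliqueAfterDeleting

lemma Adj.isNClique_pair [DecidableEq V] {G : SimpleGraph V} {u v : V} (h : G.Adj u v) :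
    G.IsNClique 2 {u, v} :=
  (isNClique_singleton.2 rfl).insert (by simpa using h)

lemma top_hasNCliqueAfterDeleting [Finite V] {k d : ℕ} (h : d + k ≤ Nat.card V) :
    (⊤ : SimpleGraph V).HasNCliqueAfterDeleting k d := by
  intro U hU
  obtain ⟨t, htU, ht⟩ := Set.exists_subset_card_eq (s := Uᶜ) (n := k)
    (by rw [Set.ncard_compl]; omega)
  have htfin : t.Finite := Set.toFinite t
  refine ⟨htfin.toFinset, ⟨IsClique.top _, ?_⟩, ?_⟩
  · rw [← ht, Set.ncard_eq_toFinset_card t htfin]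
  · simpa using Set.subset_compl_iff_disjoint_right.1 htU

lemma pathGraph_hasNCliqueAfterDeleting {ℓ d : ℕ} (h : d < ℓ / 2) :
    (pathGraph ℓ).HasNCliqueAfterDeleting 2 d := by
  intro U hU
  obtain ⟨b, hb, hbU⟩ :=
    Set.exists_lt_forall_ne_of_ncard_lt (hU.trans_lt h) (fun v : Fin ℓ ↦ v / 2)
  refine ⟨{⟨2 * b, by omega⟩, ⟨2 * b + 1, by omega⟩},
    (pathGraph_adj.2 (.inl rfl)).isNClique_pair, ?_⟩
  rw [Set.disjoint_left]
  rintro v hv hvU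
  refine hbU v hvU ?_
  rcases (by simpa using hv : v = _ ∨ v = _) with rfl | rfl <;> dsimp only <;> omega

lemma gCopies_hasNCliqueAfterDeleting [Finite α] {H : SimpleGraph α} {m k d : ℕ} {t : Finset α}
    (ht : H.IsNClique k t) (h : d < m) : (gCopies m H).HasNCliqueAfterDeleting k d := by
  intro U hU
  obtain ⟨i, hi, hiU⟩ := Set.exists_lt_forall_ne_of_ncard_lt (hU.trans_lt h) (fun v ↦ v.1.val)
  let copy : α ↪ Fin m × α := ⟨fun a ↦ (⟨i, hi⟩, a), fun _ _ h ↦ (Prod.mk.inj h).2⟩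
  refine ⟨t.map copy, ht.map.mono ((map_le_iff_le_comap _ _ _).2 fun _ _ h ↦ ⟨rfl, h⟩), ?_⟩
  rw [Set.disjoint_left]
  rintro _ hv hvU
  obtain ⟨a, -, rfl⟩ := by simpa using hv
  exact hiU _ hvU rfl

lemma turanGraph_hasNCliqueAfterDeleting {m q d : ℕ} (h : d < m) :
    (turanGraph (m * q) q).HasNCliqueAfterDeleting q d := by
  intro U hU
  obtain ⟨b, hb, hbU⟩ := Set.exists_lt_forall_ne_of_ncard_lt (hU.trans_lt h) (fun v ↦ v / q)
  have hlt (j : Fin q) : q * b + j < m * q := by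
    nlinarith [j.isLt]
  let row : Fin q ↪ Fin (m * q) :=
    ⟨fun j ↦ ⟨q * b + j, hlt j⟩, fun i j hij ↦ by simpa [Fin.ext_iff] using hij⟩
  have hrow_mod (j : Fin q) : (row j : ℕ) % q = j := by
    show (q * b + j) % q = j
    simp [Nat.mod_eq_of_lt j.isLt]
  have hrow_div (j : Fin q) : (row j : ℕ) / q = b := by
    show (q * b + j) / q = b
    rw [Nat.mul_add_div (Nat.zero_lt_of_lt j.isLt), Nat.div_eq_of_lt j.isLt, Nat.add_zero]
  refine ⟨Finset.univ.map row, ⟨?_, by simp⟩, ?_⟩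
  · simp only [Finset.coe_map, Finset.coe_univ, Set.image_univ]
    rintro _ ⟨i, rfl⟩ _ ⟨j, rfl⟩ hij
    rw [turanGraph_adj, hrow_mod, hrow_mod, Ne, Fin.val_inj]
    exact fun h ↦ hij (congrArg row h)
  · rw [Set.disjoint_left]
    rintro _ hv hvU
    obtain ⟨j, rfl⟩ := by simpa using hv
    exact hbU _ hvU (hrow_div j)

lemma exists_ncard_le_colorable_induce_compl_of_containsCopy_gJoin [Finite α]
    {F : SimpleGraph V} {G : SimpleGraph α} {H : SimpleGraph β} {r : ℕ} (hr : 0 < r)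
    (hH : H.Colorable r) (hF : ContainsCopy F (gJoin G H)) :
    ∃ U : Set V, U.ncard ≤ Nat.card α ∧ (F.induce Uᶜ).Colorable r := by
  obtain ⟨f, hf, hfadj⟩ := hF
  obtain ⟨C⟩ := hH
  refine ⟨f ⁻¹' Set.range Sum.inl, ?_, ⟨Coloring.mk
    (fun v ↦ Sum.elim (fun _ ↦ ⟨0, hr⟩) C (f v)) fun {v w} hvw ↦ ?_⟩⟩
  · rw [← Set.ncard_range_of_injective Sum.inl_injective]
    exact Set.ncard_le_ncard_of_injOn f (fun _ h ↦ h) hf.injOn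
  · have hv := v.2
    have hw := w.2
    have hadj : (gJoin G H).Adj (f v) (f w) := hfadj hvw
    simp only [Set.mem_compl_iff, Set.mem_preimage, Set.mem_range, not_exists] at hv hw
    cases hfv : f v with
    | inl a => exact absurd hfv.symm (hv a)
    | inr x =>
      cases hfw : f w with
      | inl a => exact absurd hfw.symm (hw a)
      | inr y =>
        rw [hfv, hfw] at hadj
        exact C.valid hadj

lemma HasNCliqueAfterDeleting.not_containsCopy_gJoin [Finite α] {F : SimpleGraph V}
    {G : SimpleGraph α} {H : SimpleGraph β} {k d r : ℕ} (hF : F.HasNCliqueAfterDeleting k d)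
    (hα : Nat.card α ≤ d) (hr : 0 < r) (hrk : r < k) (hH : H.Colorable r) :
    ¬ ContainsCopy F (gJoin G H) := fun hcopy ↦ by
  obtain ⟨U, hU, hcol⟩ := exists_ncard_le_colorable_induce_compl_of_containsCopy_gJoin hr hH hcopy
  have := (hF.le_chromaticNumber_induce (hU.trans hα)).trans hcol.chromaticNumber_le
  exact (Nat.cast_le.1 this).not_gt hrk

end SimpleGraph

open SimpleGraph

lemma F₁_hasNCliqueAfterDeleting {ℓ r m : ℕ} (hℓ : 4 ≤ ℓ) (hr : 2 ≤ r) (hm : ℓ + 1 ≤ m) :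
    (F₁ ℓ r m).HasNCliqueAfterDeleting (r + 1) ((ℓ - 2) / 2) := by
  have hP : (pathGraph ℓ).HasNCliqueAfterDeleting 2 ((ℓ - 2) / 2) :=
    pathGraph_hasNCliqueAfterDeleting (by omega)
  have hT : (turanGraph (m * (r - 1)) (r - 1)).HasNCliqueAfterDeleting (r - 1) ((ℓ - 2) / 2) :=
    turanGraph_hasNCliqueAfterDeleting (by omega)
  rw [show r + 1 = 2 + (r - 1) by omega]
  exact hP.union_left.join hT

lemma F₂_hasNCliqueAfterDeleting {ℓ r m : ℕ} (hr : 2 ≤ r) (hm : ℓ + 1 ≤ m) :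
    (F₂ r m).HasNCliqueAfterDeleting (r + 1) ((ℓ - 2) / 2) := by
  have hmK₂ : (gCopies m (⊤ : SimpleGraph (Fin 2))).HasNCliqueAfterDeleting 2 ((ℓ - 2) / 2) :=
    gCopies_hasNCliqueAfterDeleting (t := .univ) ⟨IsClique.top _, rfl⟩ (by omega)
  have hT : (turanGraph (m * (r - 2)) (r - 2)).HasNCliqueAfterDeleting (r - 2) ((ℓ - 2) / 2) :=
    turanGraph_hasNCliqueAfterDeleting (by omega)
  refine HasNCliqueAfterDeleting.mono ?_ (show r + 1 ≤ 2 + (2 + (r - 2)) by omega)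
  exact hmK₂.union_right.join (hmK₂.join hT)

lemma F₃_hasNCliqueAfterDeleting {ℓ r m : ℕ} (hℓ : 4 ≤ ℓ) (hr : 2 ≤ r) (hm : ℓ + 1 ≤ m) :
    (F₃ ℓ r m).HasNCliqueAfterDeleting (r + 1) ((ℓ - 2) / 2) := by
  have hK : (⊤ : SimpleGraph (Fin (ℓ - 1))).HasNCliqueAfterDeleting 2 ((ℓ - 2) / 2) :=
    top_hasNCliqueAfterDeleting (by simp only [Nat.card_fin]; omega)
  have hT : (turanGraph (m * (r - 1)) (r - 1)).HasNCliqueAfterDeleting (r - 1) ((ℓ - 2) / 2) :=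
    turanGraph_hasNCliqueAfterDeleting (by omega)
  rw [show r + 1 = 2 + (r - 1) by omega]
  exact hK.union_right.union_left.join hT

theorem target_is_free_general (ℓ r m : ℕ) (hℓ : 4 ≤ ℓ)
    (hr2 : 2 ≤ r) (hm : ℓ + 1 ≤ m) :
    (∀ n : ℕ,
      ¬ ContainsCopy (F₁ ℓ r m)
        (gJoin (⊤ : SimpleGraph (Fin ((ℓ - 2) / 2))) (turanGraph (n - (ℓ - 2) / 2) r)) ∧
      ¬ ContainsCopy (F₂ r m)
        (gJoin (⊤ : SimpleGraph (Fin ((ℓ - 2) / 2))) (turanGraph (n - (ℓ - 2) / 2) r)) ∧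
      ¬ ContainsCopy (F₃ ℓ r m)
        (gJoin (⊤ : SimpleGraph (Fin ((ℓ - 2) / 2))) (turanGraph (n - (ℓ - 2) / 2) r))) ∧
    (∀ U : Set ((Fin ℓ ⊕ Fin m) ⊕ Fin (m * (r - 1))), U.ncard = (ℓ - 2) / 2 →
      ((r : ℕ∞) + 1) ≤ ((F₁ ℓ r m).induce Uᶜ).chromaticNumber) ∧
    (∀ U : Set (((Fin 1 ⊕ Fin 2) ⊕ Fin m × Fin 2) ⊕ Fin m × Fin 2 ⊕ Fin (m * (r - 2))),
      U.ncard = (ℓ - 2) / 2 →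
      ((r : ℕ∞) + 1) ≤ ((F₂ r m).induce Uᶜ).chromaticNumber) ∧
    (∀ U : Set (((Fin (ℓ / 2) ⊕ Fin (ℓ - 1)) ⊕ Fin m) ⊕ Fin (m * (r - 1))),
      U.ncard = (ℓ - 2) / 2 →
      ((r : ℕ∞) + 1) ≤ ((F₃ ℓ r m).induce Uᶜ).chromaticNumber) := by
  have h₁ := F₁_hasNCliqueAfterDeleting hℓ hr2 hm
  have h₂ := F₂_hasNCliqueAfterDeleting hr2 hm
  have h₃ := F₃_hasNCliqueAfterDeleting hℓ hr2 hm
  have hr : 0 < r := by omega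
  have hcard : Nat.card (Fin ((ℓ - 2) / 2)) ≤ (ℓ - 2) / 2 := (Nat.card_fin _).le
  have hT (n : ℕ) := turanGraph_colorable (n := n - (ℓ - 2) / 2) hr
  refine ⟨fun n ↦ ⟨?_, ?_, ?_⟩, fun U hU ↦ ?_, fun U hU ↦ ?_, fun U hU ↦ ?_⟩
  · exact h₁.not_containsCopy_gJoin hcard hr r.lt_succ_self (hT n)
  · exact h₂.not_containsCopy_gJoin hcard hr r.lt_succ_self (hT n)
  · exact h₃.not_containsCopy_gJoin hcard hr r.lt_succ_self (hT n)
  · exact_mod_cast h₁.le_chromaticNumber_induce hU.le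
  · exact_mod_cast h₂.le_chromaticNumber_induce hU.le
  · exact_mod_cast h₃.le_chromaticNumber_induce hU.le

/-- **Proposition.** For even `ℓ ≥ 4`, `2 ≤ r ≤ ℓ-2`, `m ≥ ℓ+1`: the graph
`K_{(ℓ-2)/2} ⊗ T(n - (ℓ-2)/2, r)` is `{F₁,F₂,F₃}`-free for every `n`; indeed deleting any
set of `(ℓ-2)/2` vertices from any `F_i` leaves a graph of chromatic number at least
`r + 1`. -/
theorem target_is_free (ℓ r m : ℕ) (hℓ : 4 ≤ ℓ) (heven : Even ℓ)
    (hr2 : 2 ≤ r) (hrℓ : r ≤ ℓ - 2) (hm : ℓ + 1 ≤ m) :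
    (∀ n : ℕ,
      ¬ ContainsCopy (F₁ ℓ r m)
        (gJoin (⊤ : SimpleGraph (Fin ((ℓ - 2) / 2))) (turanGraph (n - (ℓ - 2) / 2) r)) ∧
      ¬ ContainsCopy (F₂ r m)
        (gJoin (⊤ : SimpleGraph (Fin ((ℓ - 2) / 2))) (turanGraph (n - (ℓ - 2) / 2) r)) ∧
      ¬ ContainsCopy (F₃ ℓ r m)
        (gJoin (⊤ : SimpleGraph (Fin ((ℓ - 2) / 2))) (turanGraph (n - (ℓ - 2) / 2) r))) ∧
    (∀ U : Set ((Fin ℓ ⊕ Fin m) ⊕ Fin (m * (r - 1))), U.ncard = (ℓ - 2) / 2 →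
      ((r : ℕ∞) + 1) ≤ ((F₁ ℓ r m).induce Uᶜ).chromaticNumber) ∧
    (∀ U : Set (((Fin 1 ⊕ Fin 2) ⊕ Fin m × Fin 2) ⊕ Fin m × Fin 2 ⊕ Fin (m * (r - 2))),
      U.ncard = (ℓ - 2) / 2 →
      ((r : ℕ∞) + 1) ≤ ((F₂ r m).induce Uᶜ).chromaticNumber) ∧
    (∀ U : Set (((Fin (ℓ / 2) ⊕ Fin (ℓ - 1)) ⊕ Fin m) ⊕ Fin (m * (r - 1))),
      U.ncard = (ℓ - 2) / 2 →
      ((r : ℕ∞) + 1) ≤ ((F₃ ℓ r m).induce Uᶜ).chromaticNumber) :=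
  target_is_free_general ℓ r m hℓ hr2 hm
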